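/- Let g ∈ G and let x ∈ R_g be a nonunit with (0 : x) ⊆ Rx and (Rx)_g ≠ R_g, and let φ : GI(R) → GI(R) ∪ {∅} be a function with φ(J) ⊆ J² for every graded ideal J. Then Rx is a g-φ-1-absorbing prime ideal of R if and only if Rx is a g-1-absorbing prime ideal of R. -/
import Mathlib


/-- The underlying set of an element of `GI(R) ∪ {∅}`: `none` plays the role of `∅`. -/
def phiSet {ι R : Type*} [AddGroup ι] [DecidableEq ι] [CommRing R]
    (𝒜 : ι → AddSubgroup R) [GradedRing 𝒜]
    (o : Option (HomogeneousIdeal 𝒜)) : Set R :=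
  {x | ∃ J ∈ o, x ∈ J}

/-- `I_g = I ∩ R_g`, the `g`-th graded piece of the graded ideal `I`. -/
def piece {ι R : Type*} [AddGroup ι] [DecidableEq ι] [CommRing R]
    (𝒜 : ι → AddSubgroup R) [GradedRing 𝒜]
    (I : HomogeneousIdeal 𝒜) (g : ι) : Set R :=
  (I.toIdeal : Set R) ∩ (𝒜 g)

/-- `I` is a `g`-`φ`-1-absorbing prime ideal of `R`: `I_g ≠ R_g` and whenever
`a, b, c ∈ R_g` are nonunits with `a*b*c ∈ I - φ(I)`, then `ab ∈ I` or `c ∈ I`. -/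
def IsGPhiOneAbsPrime {ι R : Type*} [AddGroup ι] [DecidableEq ι] [CommRing R]
    (𝒜 : ι → AddSubgroup R) [GradedRing 𝒜] (g : ι)
    (φ : HomogeneousIdeal 𝒜 → Option (HomogeneousIdeal 𝒜)) (I : HomogeneousIdeal 𝒜) : Prop :=
  piece 𝒜 I g ≠ (𝒜 g : Set R) ∧
    ∀ a b c : R, a ∈ 𝒜 g → b ∈ 𝒜 g → c ∈ 𝒜 g → ¬IsUnit a → ¬IsUnit b → ¬IsUnit c →
      a * b * c ∈ I.toIdeal → a * b * c ∉ phiSet 𝒜 (φ I) →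
      a * b ∈ I.toIdeal ∨ c ∈ I.toIdeal

/-- `(a, b, c)` is a `g`-`φ`-1-triple zero of `I`: `a, b, c ∈ R_g` are nonunits with
`abc ∈ φ(I)`, `ab ∉ I` and `c ∉ I`. -/
def IsGPhiTripleZero {ι R : Type*} [AddGroup ι] [DecidableEq ι] [CommRing R]
    (𝒜 : ι → AddSubgroup R) [GradedRing 𝒜] (g : ι)
    (φ : HomogeneousIdeal 𝒜 → Option (HomogeneousIdeal 𝒜)) (I : HomogeneousIdeal 𝒜)
    (a b c : R) : Prop :=
  a ∈ 𝒜 g ∧ b ∈ 𝒜 g ∧ c ∈ 𝒜 g ∧ ¬IsUnit a ∧ ¬IsUnit b ∧ ¬IsUnit c ∧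
    a * b * c ∈ phiSet 𝒜 (φ I) ∧ a * b ∉ I.toIdeal ∧ c ∉ I.toIdeal

/-- `I` is a `g`-1-absorbing prime ideal of `R`: `I_g ≠ R_g` and whenever
`a, b, c ∈ R_g` are nonunits with `a*b*c ∈ I`, then `ab ∈ I` or `c ∈ I`. -/
def IsGOneAbsPrime {ι R : Type*} [AddGroup ι] [DecidableEq ι] [CommRing R]
    (𝒜 : ι → AddSubgroup R) [GradedRing 𝒜] (g : ι) (I : HomogeneousIdeal 𝒜) : Prop :=
  piece 𝒜 I g ≠ (𝒜 g : Set R) ∧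
    ∀ a b c : R, a ∈ 𝒜 g → b ∈ 𝒜 g → c ∈ 𝒜 g → ¬IsUnit a → ¬IsUnit b → ¬IsUnit c →
      a * b * c ∈ I.toIdeal → a * b ∈ I.toIdeal ∨ c ∈ I.toIdeal

/-- Let `x ∈ R_g` be a nonunit with `(0 : x) ⊆ Rx` and `(Rx)_g ≠ R_g`, and let
`φ : GI(R) → GI(R) ∪ {∅}` satisfy `φ(J) ⊆ J²` for every graded ideal `J` (`φ ≤ φ₂`).
Then `Rx` is a `g`-`φ`-1-absorbing prime ideal of `R` if and only if `Rx` is a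
`g`-1-absorbing prime ideal of `R`. -/
theorem stmt10 {ι R : Type*} [AddGroup ι] [DecidableEq ι] [CommRing R] [Nontrivial R]
    (𝒜 : ι → AddSubgroup R) [GradedRing 𝒜] (g : ι)
    (φ : HomogeneousIdeal 𝒜 → Option (HomogeneousIdeal 𝒜))
    (hφ : ∀ J : HomogeneousIdeal 𝒜, phiSet 𝒜 (φ J) ⊆ ((J.toIdeal ^ 2 : Ideal R) : Set R))
    (x : R) (hxg : x ∈ 𝒜 g) (hxu : ¬IsUnit x)
    (Rx : HomogeneousIdeal 𝒜) (hRx : Rx.toIdeal = Ideal.span {x})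
    (hann : ∀ r : R, r * x = 0 → r ∈ Rx.toIdeal)
    (hproper : piece 𝒜 Rx g ≠ (𝒜 g : Set R)) :
    IsGPhiOneAbsPrime 𝒜 g φ Rx ↔ IsGOneAbsPrime 𝒜 g Rx := by
  constructor
  · rintro ⟨h1, h2⟩
    refine ⟨h1, fun a b c ha hb hc hau hbu hcu habc => ?_⟩
    by_cases hphi : a * b * c ∈ phiSet 𝒜 (φ Rx)
    · by_contra hcon
      push_neg at hcon
      obtain ⟨hab, hcn⟩ := hcon
      have hxmem : x ∈ Rx.toIdeal := by
        rw [hRx]; exact Ideal.mem_span_singleton_self x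
      -- c + x is a nonunit
      have hcxu : ¬IsUnit (c + x) := by
        intro hu
        obtain ⟨u, hu⟩ := hu
        have h1 : a * b * (c + x) ∈ Rx.toIdeal := by
          rw [mul_add]
          exact Ideal.add_mem _ habc (Ideal.mul_mem_left _ _ hxmem)
        have : a * b = (a * b * (c + x)) * (↑u⁻¹ : R) := by
          rw [← hu, mul_assoc, Units.mul_inv, mul_one]
        rw [this] at hab
        exact hab (Ideal.mul_mem_right _ _ h1)
      have hcxg : c + x ∈ 𝒜 g := AddSubgroup.add_mem _ hc hxg
      have habcx : a * b * (c + x) ∈ Rx.toIdeal := by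
        rw [mul_add]
        exact Ideal.add_mem _ habc (Ideal.mul_mem_left _ _ hxmem)
      by_cases hphi2 : a * b * (c + x) ∈ phiSet 𝒜 (φ Rx)
      · -- both in φ(Rx) ⊆ Rx² = span{x²}
        have hsq : (Rx.toIdeal ^ 2 : Ideal R) = Ideal.span {x ^ 2} := by
          rw [hRx, Ideal.span_singleton_pow]
        have h1 : a * b * c ∈ Ideal.span {x ^ 2} := by
          rw [← hsq]; exact hφ Rx hphi
        have h2' : a * b * (c + x) ∈ Ideal.span {x ^ 2} := by
          rw [← hsq]; exact hφ Rx hphi2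
        have h3 : a * b * x ∈ Ideal.span {x ^ 2} := by
          have : a * b * x = a * b * (c + x) - a * b * c := by ring
          rw [this]
          exact Ideal.sub_mem _ h2' h1
        obtain ⟨r, hr⟩ := Ideal.mem_span_singleton.mp h3
        have hz : (a * b - x * r) * x = 0 := by
          have : a * b * x = x ^ 2 * r := hr
          ring_nf
          ring_nf at this
          linear_combination this
        have := hann _ hz
        have hxr : x * r ∈ Rx.toIdeal := Ideal.mul_mem_right _ _ hxmem
        have : a * b ∈ Rx.toIdeal := by
          have := Ideal.add_mem _ this hxr
          simpa using this
        exact hab this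
      · rcases h2 a b (c + x) ha hb hcxg hau hbu hcxu habcx hphi2 with h | h
        · exact hab h
        · apply hcn
          have : c = (c + x) - x := by ring
          rw [this]
          exact Ideal.sub_mem _ h hxmem
    · exact h2 a b c ha hb hc hau hbu hcu habc hphi
  · rintro ⟨h1, h2⟩
    exact ⟨h1, fun a b c ha hb hc hau hbu hcu habc _ => h2 a b c ha hb hc hau hbu hcu habc⟩
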